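/- arXiv:1610.01850 — 2 statements merged into one kernel-verified Lean document; each statement's English description precedes it below -/
import Mathlib

section
/- Let Y_n ⊂ ℝ² be a Π_n-poised set, k ∈ Π of exact degree 1 with zero set K = V(k) satisfying Y_n ∩ K = ∅, let Y_{n+1} = Y_n ∪ T where T ⊂ K is a set of n + 2 distinct points, and let m ∈ Π be a polynomial of degree 1 such that 1, k, m form a basis of Π_1. Then for every t ∈ T, ℓ_{t,Y_{n+1}}(x) = Π_{s∈T\{t}} (m(x) − m(s))/(m(t) − m(s)) − k(x) · Σ_{y∈Y_n} (ℓ_{y,Y_n}(x)/k(y)) · Π_{s∈T\{t}} (m(y) − m(s))/(m(t) − m(s)). -/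
open MvPolynomial

noncomputable section

abbrev Pt : Type := Fin 2 → ℝ
abbrev BPoly : Type := MvPolynomial (Fin 2) ℝ

/-- `Π_n`: the space of bivariate polynomials of total degree at most `n`. -/
def PiLE (n : ℕ) : Submodule ℝ BPoly := MvPolynomial.restrictTotalDegree (Fin 2) ℝ n

/-- The vanishing ideal `I(Y)` of a set `Y ⊆ ℝ²`. -/
def vIdeal (Y : Set Pt) : Ideal BPoly where
  carrier := {p | ∀ y ∈ Y, eval y p = 0}
  add_mem' := by
    intro a b ha hb y hy
    simp [map_add, ha y hy, hb y hy]
  zero_mem' := by intro y hy; simp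
  smul_mem' := by
    intro c a ha y hy
    simp [smul_eq_mul, ha y hy]

/-- `I(Y)` as an `ℝ`-subspace of `Π`. -/
def vSub (Y : Set Pt) : Submodule ℝ BPoly := (vIdeal Y).restrictScalars ℝ

/-- `Y` is `Π_n`-poised: every interpolation problem on `Y` has a unique solution in `Π_n`. -/
def Poised (n : ℕ) (Y : Finset Pt) : Prop :=
  ∀ f : Pt → ℝ, ∃! p : BPoly, p ∈ PiLE n ∧ ∀ y ∈ Y, eval y p = f y

/-- `Y` is `Π_n`-independent: every interpolation problem on `Y` has a solution in `Π_n`. -/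
def PIndep (n : ℕ) (Y : Finset Pt) : Prop :=
  ∀ f : Pt → ℝ, ∃ p ∈ PiLE n, ∀ y ∈ Y, eval y p = f y

/-- `ℓ y` is the fundamental (Lagrange) polynomial of `y ∈ Y` in `Π_n`. -/
def IsFundamental (n : ℕ) (Y : Finset Pt) (ℓ : Pt → BPoly) : Prop :=
  ∀ y ∈ Y, ℓ y ∈ PiLE n ∧ ∀ y' ∈ Y, eval y' (ℓ y) = if y' = y then 1 else 0

/-- A finite family is an H-basis of the ideal `I`. -/
def IsHBasisFam {ι : Type} [Fintype ι] (I : Ideal BPoly) (h : ι → BPoly) : Prop :=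
  (∀ i, h i ∈ I) ∧ ∀ f ∈ I, ∃ g : ι → BPoly,
    (∀ i, (g i).totalDegree ≤ f.totalDegree - (h i).totalDegree) ∧ f = ∑ i, g i * h i

/-- A finite set is an H-basis of the ideal `I`. -/
def IsHBasisSet (I : Ideal BPoly) (H : Finset BPoly) : Prop :=
  (∀ p ∈ H, p ∈ I) ∧ ∀ f ∈ I, ∃ g : BPoly → BPoly,
    (∀ p ∈ H, (g p).totalDegree ≤ f.totalDegree - p.totalDegree) ∧ f = ∑ p ∈ H, g p * p

/-- `M` is a linear syzygy matrix for the family `h`. -/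
def IsLinSyz (n : ℕ) (h : Fin (n + 2) → BPoly)
    (M : Matrix (Fin (n + 1)) (Fin (n + 2)) BPoly) : Prop :=
  (∀ i j, M i j ∈ PiLE 1) ∧ ∀ i, ∑ j, M i j * h j = 0

/-- The rank of a polynomial matrix over the field of rational functions. -/
def ratRank {a b : ℕ} (M : Matrix (Fin a) (Fin b) BPoly) : ℕ :=
  (M.map (algebraMap BPoly (FractionRing BPoly))).rank


section Stmt9Helpers

open Finset

lemma mem_PiLE {N : ℕ} {p : BPoly} : p ∈ PiLE N ↔ p.totalDegree ≤ N :=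
  MvPolynomial.mem_restrictTotalDegree (Fin 2) N p

lemma aeval_eq_eval'' (x : Pt) (p : BPoly) : MvPolynomial.aeval x p = eval x p := by
  rw [MvPolynomial.aeval_def, MvPolynomial.eval, Algebra.algebraMap_self]
  rfl

lemma eval_aeval' (x : Pt) (v : Fin 2 → BPoly) (p : BPoly) :
    eval x (aeval v p) = eval (fun i => eval x (v i)) p := by
  calc eval x (aeval v p) = MvPolynomial.aeval x (aeval v p) := (aeval_eq_eval'' _ _).symm
    _ = aeval (fun i => MvPolynomial.aeval x (v i)) p := MvPolynomial.comp_aeval_apply (f := v) (MvPolynomial.aeval x) p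
    _ = eval (fun i => eval x (v i)) p := by simp only [aeval_eq_eval'']

lemma X0_dvd_sub (q : BPoly) : (X 0 : BPoly) ∣ q - aeval ![0, X 1] q := by
  induction q using MvPolynomial.induction_on with
  | C a => simp
  | add p q hp hq =>
    have : p + q - aeval ![0, X 1] (p + q)
        = (p - aeval ![0, X 1] p) + (q - aeval ![0, X 1] q) := by
      rw [map_add]; ring
    rw [this]; exact dvd_add hp hq
  | mul_X p i hp =>
    fin_cases i
    · show (X 0 : BPoly) ∣ p * X 0 - aeval ![0, X 1] (p * X 0)
      have h0 : aeval ![(0 : BPoly), X 1] (p * X 0) = 0 := by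
        rw [map_mul, aeval_X]; simp
      rw [h0, sub_zero]; exact dvd_mul_left _ _
    · show (X 0 : BPoly) ∣ p * X 1 - aeval ![0, X 1] (p * X 1)
      have h1 : p * X 1 - aeval ![(0 : BPoly), X 1] (p * X 1)
          = (p - aeval ![(0 : BPoly), X 1] p) * X 1 := by
        rw [map_mul, aeval_X]; simp; ring
      rw [h1]; exact hp.mul_right _

lemma tdeg_X0_mul_ge {p : BPoly} (hp : p ≠ 0) :
    p.totalDegree + 1 ≤ ((X 0 : BPoly) * p).totalDegree := by
  obtain ⟨d, hd, hds⟩ := Finset.exists_mem_eq_sup p.support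
    (MvPolynomial.support_nonempty.mpr hp) (fun d => d.sum fun _ e => e)
  have hmem : Finsupp.single 0 1 + d ∈ ((X 0 : BPoly) * p).support := by
    rw [MvPolynomial.support_X_mul]
    exact Finset.mem_map_of_mem _ hd
  have := MvPolynomial.le_totalDegree hmem
  rw [Finsupp.sum_add_index' (fun _ => rfl) (fun _ _ _ => rfl)] at this
  simp only [Finsupp.sum_single_index] at this
  have hts : p.totalDegree = d.sum fun _ e => e := by
    rw [MvPolynomial.totalDegree, hds]
  omega

lemma tdeg_aeval_le (v : Fin 2 → BPoly) (hv : ∀ i, (v i).totalDegree ≤ 1) (p : BPoly) :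
    (aeval v p).totalDegree ≤ p.totalDegree := by
  conv_lhs => rw [p.as_sum, map_sum]
  apply MvPolynomial.totalDegree_finsetSum_le
  intro d hd
  rw [MvPolynomial.aeval_monomial]
  refine (MvPolynomial.totalDegree_mul _ _).trans ?_
  have h1 : (algebraMap ℝ BPoly (MvPolynomial.coeff d p)).totalDegree = 0 :=
    MvPolynomial.totalDegree_C _
  rw [h1, zero_add]
  refine le_trans ?_ (MvPolynomial.le_totalDegree hd)
  rw [Finsupp.prod]
  refine (MvPolynomial.totalDegree_finset_prod _ _).trans ?_
  rw [Finsupp.sum]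
  apply Finset.sum_le_sum
  intro i _
  exact (MvPolynomial.totalDegree_pow _ _).trans
    (by have := hv i; nlinarith)

lemma natDeg_aeval_le (p : BPoly) :
    (MvPolynomial.aeval ![0, Polynomial.X] p : Polynomial ℝ).natDegree ≤ p.totalDegree := by
  conv_lhs => rw [p.as_sum, map_sum]
  apply Polynomial.natDegree_sum_le_of_forall_le
  intro d hd
  rw [MvPolynomial.aeval_monomial]
  refine (Polynomial.natDegree_mul_le).trans ?_
  have h1 : (algebraMap ℝ (Polynomial ℝ) (MvPolynomial.coeff d p)).natDegree = 0 :=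
    Polynomial.natDegree_C _
  rw [h1, zero_add]
  refine le_trans ?_ (MvPolynomial.le_totalDegree hd)
  rw [Finsupp.prod]
  refine (Polynomial.natDegree_prod_le _ _).trans ?_
  rw [Finsupp.sum]
  apply Finset.sum_le_sum
  intro i _
  refine (Polynomial.natDegree_pow_le).trans ?_
  have : (![(0 : Polynomial ℝ), Polynomial.X] i).natDegree ≤ 1 := by
    fin_cases i <;> simp
  nlinarith

end Stmt9Helpers

/-- In the Berzolari–Radon construction, for each `t ∈ T` the
fundamental polynomial of `Y_{n+1}` is
`ℓ_{t,Y_{n+1}} = Π_{s∈T\{t}} (m−m(s))/(m(t)−m(s))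
  − k · Σ_{y∈Y_n} (ℓ_{y,Y_n}/k(y)) Π_{s∈T\{t}} (m(y)−m(s))/(m(t)−m(s))`. -/
theorem stmt9 (n : ℕ) (Y T : Finset Pt) (k m : BPoly) (hk : k.totalDegree = 1)
    (hY : Poised n Y)
    (hYK : ∀ y ∈ Y, eval y k ≠ 0)
    (hT : ∀ t ∈ T, eval t k = 0)
    (hTcard : T.card = n + 2)
    (hm1 : LinearIndependent ℝ ![(1 : BPoly), k, m])
    (hm2 : Submodule.span ℝ ({1, k, m} : Set BPoly) = PiLE 1)
    (ell L : Pt → BPoly)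
    (hell : IsFundamental n Y ell)
    (hL : IsFundamental (n + 1) (Y ∪ T) L) :
    ∀ t ∈ T,
      L t = (∏ s ∈ T.erase t, C ((eval t m - eval s m)⁻¹) * (m - C (eval s m)))
        - k * ∑ y ∈ Y, C ((eval y k)⁻¹) * ell y *
            C (∏ s ∈ T.erase t, (eval y m - eval s m) / (eval t m - eval s m)) := by
  classical
  intro t ht
  -- coefficients expressing X i in terms of 1, k, m
  have hrange : ({1, k, m} : Set BPoly) = Set.range ![1, k, m] := by
    rw [Matrix.range_cons, Matrix.range_cons_cons_empty, Set.singleton_union]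
  have hXmem : ∀ i : Fin 2, (X i : BPoly) ∈ Submodule.span ℝ (Set.range ![1, k, m]) := by
    intro i
    rw [← hrange, hm2, mem_PiLE, MvPolynomial.totalDegree_X]
  have hc : ∀ i : Fin 2, ∃ c : Fin 3 → ℝ, ∑ j, c j • ![(1 : BPoly), k, m] j = X i := by
    intro i
    exact Submodule.mem_span_range_iff_exists_fun ℝ |>.mp (hXmem i)
  choose c hcc using hc
  have hevalX : ∀ (i : Fin 2) (u : Pt),
      u i = c i 0 + c i 1 * eval u k + c i 2 * eval u m := by
    intro i u
    have h := congrArg (eval u) (hcc i)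
    simp only [map_sum, map_add, Fin.sum_univ_three, MvPolynomial.smul_eq_C_mul, map_mul,
      MvPolynomial.eval_C, Matrix.cons_val_zero, Matrix.cons_val_one, Matrix.head_cons,
      Matrix.cons_val_two, Matrix.tail_cons, map_one, MvPolynomial.eval_X, mul_one] at h
    linarith [h]
  have hinj : ∀ u v : Pt, eval u k = 0 → eval v k = 0 → eval u m = eval v m → u = v := by
    intro u v hu hv hm'
    funext i
    rw [hevalX i u, hevalX i v, hu, hv, hm']
  have hdisj : ∀ y ∈ Y, y ∉ T := fun y hy hyT => hYK y hy (hT y hyT)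
  have htY : t ∈ Y ∪ T := Finset.mem_union_right _ ht
  have hmne : ∀ s ∈ T.erase t, eval t m - eval s m ≠ 0 := by
    intro s hs h0
    have hst : s ≠ t := (Finset.mem_erase.mp hs).1
    exact hst (hinj s t (hT s (Finset.mem_of_mem_erase hs)) (hT t ht)
      (by linarith [sub_eq_zero.mp h0]))
  set P : BPoly := ∏ s ∈ T.erase t, C ((eval t m - eval s m)⁻¹) * (m - C (eval s m)) with hPdef
  set Q : BPoly := ∑ y ∈ Y, C ((eval y k)⁻¹) * ell y *
      C (∏ s ∈ T.erase t, (eval y m - eval s m) / (eval t m - eval s m)) with hQdef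
  -- membership facts
  have hmP1 : m ∈ PiLE 1 := by
    rw [← hm2]; exact Submodule.subset_span (by simp)
  have hcard : (T.erase t).card = n + 1 := by
    rw [Finset.card_erase_of_mem ht, hTcard]
    omega
  have hPmem : P ∈ PiLE (n + 1) := by
    rw [mem_PiLE]
    refine (MvPolynomial.totalDegree_finset_prod _ _).trans ?_
    calc ∑ s ∈ T.erase t, (C ((eval t m - eval s m)⁻¹) * (m - C (eval s m))).totalDegree
        ≤ ∑ _s ∈ T.erase t, 1 := by
          refine Finset.sum_le_sum fun s _ => ?_
          refine mem_PiLE.mp ?_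
          have : C ((eval t m - eval s m)⁻¹) * (m - C (eval s m))
              = (eval t m - eval s m)⁻¹ • (m - C (eval s m)) := by
            rw [MvPolynomial.smul_eq_C_mul]
          rw [this]
          refine Submodule.smul_mem _ _ (Submodule.sub_mem _ hmP1 ?_)
          rw [mem_PiLE, MvPolynomial.totalDegree_C]; omega
      _ = n + 1 := by rw [Finset.sum_const, hcard, smul_eq_mul, mul_one]
  have hQmem : Q ∈ PiLE n := by
    refine Submodule.sum_mem _ fun y hy => ?_
    have h1 : C ((eval y k)⁻¹) * ell y *
        C (∏ s ∈ T.erase t, (eval y m - eval s m) / (eval t m - eval s m))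
        = ((eval y k)⁻¹ * ∏ s ∈ T.erase t, (eval y m - eval s m) / (eval t m - eval s m))
          • ell y := by
      rw [MvPolynomial.smul_eq_C_mul, map_mul]; ring
    rw [h1]
    exact Submodule.smul_mem _ _ (hell y hy).1
  have hRmem : P - k * Q ∈ PiLE (n + 1) := by
    refine Submodule.sub_mem _ hPmem ?_
    rw [mem_PiLE]
    refine (MvPolynomial.totalDegree_mul _ _).trans ?_
    rw [hk]
    have := mem_PiLE.mp hQmem
    omega
  -- evaluations
  have hevP : ∀ u : Pt, eval u P
      = ∏ s ∈ T.erase t, (eval t m - eval s m)⁻¹ * (eval u m - eval s m) := by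
    intro u
    rw [hPdef, map_prod]
    exact Finset.prod_congr rfl fun s _ => by
      rw [map_mul, map_sub, MvPolynomial.eval_C, MvPolynomial.eval_C]
  have hevkQ : ∀ u : Pt, eval u (k * Q) = eval u k *
      ∑ y ∈ Y, (eval y k)⁻¹ * eval u (ell y) *
        ∏ s ∈ T.erase t, (eval y m - eval s m) / (eval t m - eval s m) := by
    intro u
    rw [map_mul, hQdef, map_sum]
    congr 1
    exact Finset.sum_congr rfl fun y _ => by
      rw [map_mul, map_mul, MvPolynomial.eval_C, MvPolynomial.eval_C]
  have hRval : ∀ u ∈ Y ∪ T, eval u (P - k * Q) = if u = t then 1 else 0 := by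
    intro u hu
    rcases Finset.mem_union.mp hu with huY | huT
    · have hut : u ≠ t := fun h => (hdisj u huY) (h ▸ ht)
      rw [map_sub, hevkQ u, hevP u, if_neg hut]
      have hsum : ∑ y ∈ Y, (eval y k)⁻¹ * eval u (ell y) *
          ∏ s ∈ T.erase t, (eval y m - eval s m) / (eval t m - eval s m)
          = (eval u k)⁻¹ *
            ∏ s ∈ T.erase t, (eval u m - eval s m) / (eval t m - eval s m) := by
        rw [Finset.sum_eq_single u]
        · rw [(hell u huY).2 u huY, if_pos rfl, mul_one]
        · intro y hy hne
          rw [(hell y hy).2 u huY, if_neg (fun h => hne h.symm)]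
          ring
        · intro h; exact absurd huY h
      rw [hsum, ← mul_assoc, mul_inv_cancel₀ (hYK u huY), one_mul]
      rw [sub_eq_zero]
      exact Finset.prod_congr rfl fun s _ => by rw [div_eq_mul_inv, mul_comm]
    · rw [map_sub, hevkQ u, hT u huT, zero_mul, sub_zero, hevP u]
      by_cases hut : u = t
      · subst hut
        rw [if_pos rfl]
        exact Finset.prod_eq_one fun s hs => inv_mul_cancel₀ (hmne s hs)
      · rw [if_neg hut]
        refine Finset.prod_eq_zero (Finset.mem_erase.mpr ⟨hut, huT⟩) ?_
        rw [sub_self, mul_zero]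
  -- D vanishes on Y ∪ T and lies in Π_{n+1}
  set D : BPoly := L t - (P - k * Q) with hDdef
  have hDmem : D.totalDegree ≤ n + 1 := mem_PiLE.mp (Submodule.sub_mem _ (hL t htY).1 hRmem)
  have hDval : ∀ u ∈ Y ∪ T, eval u D = 0 := by
    intro u hu
    rw [hDdef, map_sub, (hL t htY).2 u hu, hRval u hu, sub_self]
  -- change of variables
  set w : Fin 2 → BPoly := fun i => C (c i 0) + C (c i 1) * X 0 + C (c i 2) * X 1 with hwdef
  have hw1 : ∀ i, (w i).totalDegree ≤ 1 := by
    intro i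
    refine mem_PiLE.mp ?_
    have : w i = (c i 0) • (1 : BPoly) + (c i 1) • X 0 + (c i 2) • X 1 := by
      simp [hwdef, MvPolynomial.smul_eq_C_mul]
    rw [this]
    refine Submodule.add_mem _ (Submodule.add_mem _ ?_ ?_) ?_ <;>
      refine Submodule.smul_mem _ _ (mem_PiLE.mpr ?_)
    · rw [MvPolynomial.totalDegree_one]; omega
    · rw [MvPolynomial.totalDegree_X]
    · rw [MvPolynomial.totalDegree_X]
  have hkm1 : ∀ i, ((![k, m] : Fin 2 → BPoly) i).totalDegree ≤ 1 := by
    intro i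
    fin_cases i
    · simpa using hk.le
    · simpa using mem_PiLE.mp hmP1
  have hφψ : ∀ q : BPoly, aeval ![k, m] (aeval w q) = q := by
    intro q
    rw [MvPolynomial.comp_aeval_apply (f := w) (MvPolynomial.aeval ![k, m]) q]
    have hwi : ∀ i, MvPolynomial.aeval ![k, m] (w i) = X i := by
      intro i
      rw [← hcc i]
      simp only [hwdef, map_add, map_mul, MvPolynomial.aeval_C, MvPolynomial.aeval_X,
        Fin.sum_univ_three, MvPolynomial.smul_eq_C_mul, Matrix.cons_val_zero,
        Matrix.cons_val_one, Matrix.head_cons, Matrix.cons_val_two, Matrix.tail_cons,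
        mul_one, MvPolynomial.algebraMap_eq]
    simp only [hwi]
    exact MvPolynomial.aeval_X_left_apply q
  set Dh : BPoly := aeval w D with hDhdef
  have hDh_deg : Dh.totalDegree ≤ n + 1 := (tdeg_aeval_le w hw1 D).trans hDmem
  have hvan : ∀ t' ∈ T, eval ![(0 : ℝ), eval t' m] Dh = 0 := by
    intro t' ht'
    have h0 := hDval t' (Finset.mem_union_right _ ht')
    rw [← hφψ D] at h0
    rw [eval_aeval'] at h0
    have : (fun i => eval t' ((![k, m] : Fin 2 → BPoly) i)) = ![(0 : ℝ), eval t' m] := by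
      funext i
      fin_cases i
      · simp [hT t' ht']
      · simp
    rwa [this] at h0
  -- univariate restriction to the line
  set r : Polynomial ℝ := MvPolynomial.aeval ![0, Polynomial.X] Dh with hrdef
  have hr_deg : r.natDegree ≤ n + 1 := (natDeg_aeval_le Dh).trans hDh_deg
  have hr_eval : ∀ x : ℝ, r.eval x = eval ![(0 : ℝ), x] Dh := by
    intro x
    have h := MvPolynomial.comp_aeval_apply (f := ![(0 : Polynomial ℝ), Polynomial.X])
      (Polynomial.aeval x : Polynomial ℝ →ₐ[ℝ] ℝ) Dh
    have l1 : (Polynomial.aeval x) r = r.eval x :=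
      congrFun (Polynomial.coe_aeval_eq_eval x) r
    have l2 : (fun i => (Polynomial.aeval x) ((![(0 : Polynomial ℝ), Polynomial.X]) i))
        = (![(0 : ℝ), x] : Fin 2 → ℝ) := by
      funext i; fin_cases i <;> simp
    rw [l2, ← hrdef, l1] at h
    rw [h, aeval_eq_eval'']
  set S : Finset ℝ := T.image (fun t' => eval t' m) with hSdef
  have hScard : S.card = n + 2 := by
    rw [hSdef, Finset.card_image_of_injOn, hTcard]
    intro a ha b hb hab
    exact hinj a b (hT a ha) (hT b hb) hab
  have hr0 : r = 0 := by
    refine Polynomial.eq_zero_of_natDegree_lt_card_of_eval_eq_zero' r S ?_ ?_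
    · intro x hx
      obtain ⟨t', ht', rfl⟩ := Finset.mem_image.mp hx
      rw [hr_eval]
      exact hvan t' ht'
    · omega
  have hzero : aeval ![(0 : BPoly), X 1] Dh = 0 := by
    apply MvPolynomial.funext
    intro z
    rw [eval_aeval']
    have l3 : (fun i => eval z ((![(0 : BPoly), X 1]) i)) = ![(0 : ℝ), z 1] := by
      funext i; fin_cases i <;> simp
    rw [l3, ← hr_eval, hr0]
    simp
  have hdvd : (X 0 : BPoly) ∣ Dh := by
    have h := X0_dvd_sub Dh
    rwa [hzero, sub_zero] at h
  obtain ⟨h₁, hh⟩ := hdvd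
  have key : D = 0 := by
    by_cases hh0 : h₁ = 0
    · rw [← hφψ D, ← hDhdef, hh, hh0, mul_zero, map_zero]
    · have hdeg1 : h₁.totalDegree ≤ n := by
        have hge := tdeg_X0_mul_ge hh0
        rw [← hh] at hge
        omega
      have hDeq : D = k * aeval ![k, m] h₁ := by
        rw [← hφψ D, ← hDhdef, hh, map_mul]
        congr 1
        simp
      have hhdeg : (aeval ![k, m] h₁).totalDegree ≤ n :=
        (tdeg_aeval_le _ hkm1 h₁).trans hdeg1
      have hhY : ∀ y ∈ Y, eval y (aeval ![k, m] h₁) = 0 := by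
        intro y hy
        have h0 := hDval y (Finset.mem_union_left _ hy)
        rw [hDeq, map_mul] at h0
        exact (mul_eq_zero.mp h0).resolve_left (hYK y hy)
      obtain ⟨p0, hp0, hp0u⟩ := hY fun _ => 0
      have e1 := hp0u (aeval ![k, m] h₁) ⟨mem_PiLE.mpr hhdeg, hhY⟩
      have e2 := hp0u 0 ⟨Submodule.zero_mem _, fun y _ => by simp⟩
      rw [hDeq, e1.trans e2.symm, mul_zero]
  rw [hDdef] at key
  exact sub_eq_zero.mp key
end
end

section
/- Let Y_n ⊂ ℝ² be a Π_n-poised set and T a set of n + 2 distinct points, disjoint from Y_n, such that Y_{n+1} = Y_n ∪ T is Π_{n+1}-poised. Then the n + 2 polynomials h_t := ℓ_{t,Y_{n+1}}, t ∈ T, belong to Π_{n+1} ∩ I(Y_n), form a vector-space basis of Π_{n+1} ∩ I(Y_n), and form an H-basis of the ideal I(Y_n). -/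
open MvPolynomial

noncomputable section

/-!
Poisedness of `Y ∪ T` makes every `p ∈ Π_{n+1} ∩ I(Y)` equal to `∑_{t ∈ T} p(t) h_t`, and the `h_t`
are independent since `h_t(t') = δ_{tt'}`. Poisedness of `Y` gives `Π_n ∩ I(Y) = 0`, so taking the
homogeneous part of degree `n + 1` is injective on `Π_{n+1} ∩ I(Y)`: the leading forms of the `h_t`
are `n + 2` independent forms of degree `n + 1`, hence a basis of all of them. For `f ∈ I(Y)` of
degree `m > n`, the top form of `f` is then `∑ q_t · lead(h_t)` with `deg q_t = m - n - 1`, and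
`f - ∑ q_t h_t ∈ I(Y)` has lower degree, so induction on the degree yields the H-basis property.
-/

namespace Submodule

theorem exists_sum_mul_of_mem_mul_span_range {R A ι : Type*} [CommSemiring R] [Semiring A]
    [Algebra R A] [Fintype ι] {M : Submodule R A} {v : ι → A} {x : A}
    (hx : x ∈ M * span R (Set.range v)) : ∃ q : ι → A, (∀ i, q i ∈ M) ∧ x = ∑ i, q i * v i := by
  classical
  rw [span_range_eq_iSup, mul_iSup] at hx
  obtain ⟨μ, rfl⟩ := (mem_iSup_finset_iff_exists_sum (s := Finset.univ) _ x).mp (by simpa using hx)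
  choose q hq hqv using fun i => mem_mul_span_singleton.mp (μ i).2
  exact ⟨q, hq, by simp [hqv]⟩

end Submodule

namespace MvPolynomial

variable {σ R : Type*}

theorem homogeneousSubmodule_le_mul [CommSemiring R] {d m : ℕ} (hdm : d ≤ m) :
    homogeneousSubmodule σ R m ≤
      homogeneousSubmodule σ R (m - d) * homogeneousSubmodule σ R d := by
  rw [homogeneousSubmodule_eq_finsupp_supported, ← restrictSupport, restrictSupport_eq_span,
    Submodule.span_le]
  rintro _ ⟨α, hα : α.degree = m, rfl⟩
  obtain ⟨γ, hγα, hγ⟩ := α.exists_le_degree_eq d (hα ▸ hdm)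
  have hdeg : (α - γ).degree = m - d := by
    have := congrArg Finsupp.degree (tsub_add_cancel_of_le hγα)
    rw [map_add] at this
    omega
  have hsplit : (monomial α 1 : MvPolynomial σ R) = monomial (α - γ) 1 * monomial γ 1 := by
    rw [monomial_mul, tsub_add_cancel_of_le hγα, mul_one]
  change monomial α (1 : R) ∈ _
  rw [hsplit]
  exact Submodule.mul_mem_mul (isHomogeneous_monomial _ hdeg) (isHomogeneous_monomial _ hγ)

theorem finrank_homogeneousSubmodule [Fintype σ] [Field R] (n : ℕ) :
    Module.finrank R (homogeneousSubmodule σ R n) = (Fintype.card σ + n - 1).choose n := by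
  classical
  have hs : {d : σ →₀ ℕ | d.degree = n} = ↑(Finset.univ.finsuppAntidiag n : Finset (σ →₀ ℕ)) := by
    ext d
    simp [Finsupp.degree_eq_sum]
  rw [homogeneousSubmodule_eq_finsupp_supported, ← restrictSupport,
    Module.finrank_eq_nat_card_basis (basisRestrictSupport R _), hs, Nat.card_coe_set_eq,
    Set.ncard_coe_finset, Finset.card_finsuppAntidiag_nat_eq_choose, Finset.card_univ]

theorem span_eq_homogeneousSubmodule_of_linearIndependent [Fintype σ] [Field R] {ι : Type*}
    [Fintype ι] {v : ι → MvPolynomial σ R} {n : ℕ} (hv : LinearIndependent R v)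
    (hvn : ∀ i, (v i).IsHomogeneous n)
    (hcard : Fintype.card ι = (Fintype.card σ + n - 1).choose n) :
    Submodule.span R (Set.range v) = homogeneousSubmodule σ R n :=
  have := Module.Finite.iff_fg.mpr (homogeneousSubmodule_fg σ R n)
  Submodule.eq_of_le_of_finrank_eq (Submodule.span_le.mpr <| Set.range_subset_iff.mpr hvn)
    (by rw [finrank_span_eq_card hv, hcard, finrank_homogeneousSubmodule])

theorem totalDegree_sub_homogeneousComponent_le [CommRing R] {p : MvPolynomial σ R} {n : ℕ}
    (h : p.totalDegree ≤ n + 1) : (p - homogeneousComponent (n + 1) p).totalDegree ≤ n := by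
  refine Finset.sup_le fun d hd => ?_
  rw [mem_support_iff, coeff_sub, coeff_homogeneousComponent] at hd
  split_ifs at hd with hdeg
  · simp at hd
  · rw [sub_zero] at hd
    have := le_totalDegree (mem_support_iff.mpr hd)
    have hsum : d.degree = d.sum fun _ e => e := rfl
    omega

section HBasis

variable [CommRing R] {ι : Type*} [Fintype ι]

theorem totalDegree_sub_sum_mul_le {f : MvPolynomial σ R} {q h : ι → MvPolynomial σ R}
    {n m : ℕ} (hf : f.totalDegree ≤ m) (hnm : n + 1 ≤ m)
    (hq : ∀ i, (q i).totalDegree ≤ m - (n + 1)) (hh : ∀ i, (h i).totalDegree ≤ n + 1)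
    (hlead : homogeneousComponent m f = ∑ i, q i * homogeneousComponent (n + 1) (h i)) :
    (f - ∑ i, q i * h i).totalDegree ≤ m - 1 := by
  have hsplit : f - ∑ i, q i * h i = (f - homogeneousComponent m f) -
      ∑ i, q i * (h i - homogeneousComponent (n + 1) (h i)) := by
    simp only [hlead, mul_sub, Finset.sum_sub_distrib]
    ring
  have hf' : (f - homogeneousComponent (m - 1 + 1) f).totalDegree ≤ m - 1 :=
    totalDegree_sub_homogeneousComponent_le (by omega)
  rw [Nat.sub_add_cancel (by omega)] at hf'
  have hrest : (∑ i, q i * (h i - homogeneousComponent (n + 1) (h i))).totalDegree ≤ m - 1 := by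
    refine (totalDegree_finsetSum_le fun i _ => ?_)
    refine (totalDegree_mul _ _).trans ?_
    have := totalDegree_sub_homogeneousComponent_le (hh i)
    have := hq i
    omega
  rw [hsplit]
  exact (totalDegree_sub _ _).trans (max_le hf' hrest)

theorem exists_sum_mul_of_homogeneousSubmodule_le_span {I : Ideal (MvPolynomial σ R)}
    {h : ι → MvPolynomial σ R} {n : ℕ} (hI : ∀ p ∈ I, p.totalDegree ≤ n → p = 0)
    (hhI : ∀ i, h i ∈ I) (hh : ∀ i, (h i).totalDegree ≤ n + 1)
    (hspan : homogeneousSubmodule σ R (n + 1) ≤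
      Submodule.span R (Set.range fun i => homogeneousComponent (n + 1) (h i)))
    {f : MvPolynomial σ R} (hf : f ∈ I) :
    ∃ g : ι → MvPolynomial σ R,
      (∀ i, (g i).totalDegree ≤ f.totalDegree - (n + 1)) ∧ f = ∑ i, g i * h i := by
  suffices ∀ m, ∀ f ∈ I, f.totalDegree ≤ m → ∃ g : ι → MvPolynomial σ R,
      (∀ i, (g i).totalDegree ≤ m - (n + 1)) ∧ f = ∑ i, g i * h i from this _ f hf le_rfl
  intro m
  induction m using Nat.strong_induction_on with
  | _ m ih =>
    intro f hf hfm
    rcases le_or_gt m n with hmn | hnm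
    · exact ⟨0, by simp, by simp [hI f hf (hfm.trans hmn)]⟩
    obtain ⟨q, hq, hlead⟩ := Submodule.exists_sum_mul_of_mem_mul_span_range <|
      mul_le_mul_right hspan _ <| homogeneousSubmodule_le_mul hnm <|
        homogeneousComponent_isHomogeneous m f
    have hqdeg : ∀ i, (q i).totalDegree ≤ m - (n + 1) := fun i => (hq i).totalDegree_le
    obtain ⟨g, hg, hfg⟩ := ih (m - 1) (by omega) (f - ∑ i, q i * h i)
      (sub_mem hf (sum_mem fun i _ => I.mul_mem_left _ (hhI i)))
      (totalDegree_sub_sum_mul_le hfm hnm hqdeg hh hlead)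
    refine ⟨g + q, fun i => (totalDegree_add _ _).trans (max_le ?_ (hqdeg i)), ?_⟩
    · exact (hg i).trans (by omega)
    · simp only [Pi.add_apply, add_mul, Finset.sum_add_distrib, ← hfg]
      ring

end HBasis

end MvPolynomial

namespace Poised

variable {m : ℕ} {Z : Finset Pt}

theorem eq_of_eval_eq (hZ : Poised m Z) {p q : BPoly} (hp : p ∈ PiLE m) (hq : q ∈ PiLE m)
    (h : ∀ z ∈ Z, eval z p = eval z q) : p = q := by
  obtain ⟨r, _, hr⟩ := hZ fun z => eval z p
  exact (hr p ⟨hp, fun _ _ => rfl⟩).trans (hr q ⟨hq, fun z hz => (h z hz).symm⟩).symm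

theorem eq_zero_of_mem_vIdeal (hZ : Poised m Z) {p : BPoly} (hp : p.totalDegree ≤ m)
    (hpZ : p ∈ vIdeal Z) : p = 0 :=
  hZ.eq_of_eval_eq ((mem_restrictTotalDegree _ _ _).mpr hp) (zero_mem _)
    fun z hz => by simpa using hpZ z hz

end Poised

namespace IsFundamental

variable {m : ℕ} {Z : Finset Pt} {ℓ : Pt → BPoly}

theorem sum_eval_smul (hZ : Poised m Z) (hℓ : IsFundamental m Z ℓ) {p : BPoly}
    (hp : p ∈ PiLE m) : ∑ z ∈ Z, eval z p • ℓ z = p := by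
  refine hZ.eq_of_eval_eq (sum_mem fun z hz => Submodule.smul_mem _ _ (hℓ z hz).1) hp
    fun z hz => ?_
  simp only [map_sum, smul_eval]
  rw [Finset.sum_congr rfl fun y hy => by rw [(hℓ y hy).2 z hz]]
  simp [hz]

theorem linearIndependent (hℓ : IsFundamental m Z ℓ) {S : Finset Pt} (hS : S ⊆ Z) :
    LinearIndependent ℝ fun s : S => ℓ s := by
  let evalS : BPoly →ₗ[ℝ] S → ℝ := LinearMap.pi fun s : S => (aeval (s : Pt)).toLinearMap
  refine LinearIndependent.of_comp evalS ?_
  convert (Pi.basisFun ℝ S).linearIndependent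
  ext s s'
  simp only [Function.comp_apply, evalS, LinearMap.pi_apply, AlgHom.toLinearMap_apply,
    aeval_eq_eval, Pi.basisFun_apply, (hℓ _ (hS s.2)).2 _ (hS s'.2), Pi.single_apply,
    Subtype.ext_iff]

variable {Y T : Finset Pt}

theorem mem_vIdeal (hℓ : IsFundamental m (Y ∪ T) ℓ) (hYT : Disjoint Y T) {t : Pt} (ht : t ∈ T) :
    ℓ t ∈ vIdeal Y := fun y hy => by
  rw [(hℓ t (Finset.mem_union_right Y ht)).2 y (Finset.mem_union_left T hy),
    if_neg fun (h : y = t) => Finset.disjoint_left.mp hYT hy (h ▸ ht)]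

theorem span_image_eq (hZ : Poised m (Y ∪ T)) (hℓ : IsFundamental m (Y ∪ T) ℓ)
    (hYT : Disjoint Y T) : Submodule.span ℝ (ℓ '' T) = PiLE m ⊓ vSub Y := by
  refine le_antisymm (Submodule.span_le.mpr ?_) fun p ⟨hp, hpY⟩ => ?_
  · rintro _ ⟨t, ht, rfl⟩
    exact ⟨(hℓ t (Finset.mem_union_right Y ht)).1, hℓ.mem_vIdeal hYT ht⟩
  rw [← hℓ.sum_eval_smul hZ hp, Finset.sum_union hYT,
    Finset.sum_eq_zero fun y hy => by rw [show eval y p = 0 from hpY y hy, zero_smul], zero_add]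
  exact sum_mem fun t ht => Submodule.smul_mem _ _ (Submodule.subset_span ⟨t, ht, rfl⟩)

end IsFundamental

theorem disjoint_ker_homogeneousComponent {n : ℕ} {Y : Finset Pt} (hY : Poised n Y) :
    Disjoint (PiLE (n + 1) ⊓ vSub Y) (LinearMap.ker (homogeneousComponent (n + 1))) := by
  refine Submodule.disjoint_def.mpr fun p ⟨hp, hpY⟩ hlead => hY.eq_zero_of_mem_vIdeal ?_ hpY
  simpa [LinearMap.mem_ker.mp hlead] using
    totalDegree_sub_homogeneousComponent_le ((mem_restrictTotalDegree _ _ _).mp hp)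

/-- If `Y_n` is `Π_n`-poised, `T` is a set of `n+2` points
disjoint from `Y_n` with `Y_{n+1} = Y_n ∪ T` `Π_{n+1}`-poised, then the
polynomials `h_t := ℓ_{t,Y_{n+1}}`, `t ∈ T`, lie in `Π_{n+1} ∩ I(Y_n)`, form a
vector-space basis of `Π_{n+1} ∩ I(Y_n)`, and form an H-basis of `I(Y_n)`. -/
theorem stmt11 (n : ℕ) (Y T : Finset Pt)
    (hY : Poised n Y)
    (hTcard : T.card = n + 2)
    (hdisj : Disjoint Y T)
    (hY1 : Poised (n + 1) (Y ∪ T))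
    (L : Pt → BPoly)
    (hL : IsFundamental (n + 1) (Y ∪ T) L) :
    (∀ t ∈ T, L t ∈ PiLE (n + 1) ⊓ vSub (Y : Set Pt)) ∧
    LinearIndependent ℝ (fun t : {x // x ∈ T} => L t) ∧
    Submodule.span ℝ (L '' (T : Set Pt)) = PiLE (n + 1) ⊓ vSub (Y : Set Pt) ∧
    IsHBasisFam (vIdeal (Y : Set Pt)) (fun t : {x // x ∈ T} => L t) := by
  have hspan := hL.span_image_eq hY1 hdisj
  have hli := hL.linearIndependent Finset.subset_union_right
  have hlead : LinearIndependent ℝ fun t : T => homogeneousComponent (n + 1) (L t) :=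
    hli.map (by convert disjoint_ker_homogeneousComponent hY; rw [← hspan, Set.image_eq_range]; rfl)
  have hleadSpan : Submodule.span ℝ (Set.range fun t : T => homogeneousComponent (n + 1) (L t)) =
      homogeneousSubmodule (Fin 2) ℝ (n + 1) :=
    span_eq_homogeneousSubmodule_of_linearIndependent hlead
      (fun _ => homogeneousComponent_isHomogeneous _ _)
      (by rw [Fintype.card_coe, hTcard, Fintype.card_fin, show 2 + (n + 1) - 1 = n + 1 + 1 by omega,
        Nat.choose_succ_self_right])
  have hdeg : ∀ t : T, (L t).totalDegree = n + 1 := fun t =>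
    le_antisymm ((mem_restrictTotalDegree _ _ _).mp (hL t (Finset.mem_union_right Y t.2)).1)
      (not_lt.mp fun h => hlead.ne_zero t (homogeneousComponent_eq_zero _ _ h))
  refine ⟨fun t ht => hspan ▸ Submodule.subset_span ⟨t, ht, rfl⟩, hli, hspan,
    fun t => hL.mem_vIdeal hdisj t.2, fun f hf => ?_⟩
  obtain ⟨g, hg, hfg⟩ := exists_sum_mul_of_homogeneousSubmodule_le_span
    (fun p hp hpn => hY.eq_zero_of_mem_vIdeal hpn hp) (fun t => hL.mem_vIdeal hdisj t.2)
    (fun t => (hdeg t).le) hleadSpan.ge hf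
  exact ⟨g, fun t => hdeg t ▸ hg t, hfg⟩
end
end
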